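/- Let ε > 0, c ∈ ℝ, and let λ : [0,1] → ℝ be continuous. Let G be the unique continuous solution on D = {(δ,η) : 0 ≤ η ≤ δ, δ + η ≤ 2} of the integral equation G(δ,η) = −(1/(4ε)) ∫_η^δ (c + λ(τ/2)) dτ + (1/(4ε)) ∫_η^δ ∫₀^η (c + λ((τ−s)/2)) G(τ,s) ds dτ. Define k on the triangle T = {(x,ξ) ∈ ℝ² : 0 ≤ ξ ≤ x ≤ 1} by k(x,ξ) := G(x+ξ, x−ξ). Then k is continuously differentiable on T, and satisfies the boundary conditions k(x,0) = 0 and k(x,x) = −(1/(2ε)) ∫₀ˣ (λ(ξ) + c) dξ for all x ∈ [0,1]. -/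

import Mathlib

/-!
The right-hand side of the integral equation is assembled from the primitive `∫_η^δ f` and the
double primitive `∫_η^δ ∫_0^η K` of continuous functions, once `λ` and `G` are extended
continuously beyond `[0,1]` and `D` (Tietze). Such primitives are `C¹` on `ℝ²` because both
partial derivatives exist and are continuous (the `η`-derivative of the double primitive is read
off after swapping the order of integration). So `G` agrees on `D` with a `C¹` function, and
`k = G ∘ (x + ξ, x − ξ)` is `C¹` on `T`. At `ξ = 0` both integrals run over `[x, x]`; at `ξ = x`
the inner integral runs over `[0, 0]` and the substitution `τ = 2ξ` turns `1/(4ε)` into `1/(2ε)`.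
-/

open Set

/-- The domain `D = {(δ,η) : 0 ≤ η ≤ δ, δ + η ≤ 2}` in characteristic coordinates. -/
def Dcc : Set (ℝ × ℝ) := {p | 0 ≤ p.2 ∧ p.2 ≤ p.1 ∧ p.1 + p.2 ≤ 2}

/-- The triangular domain `T = {(x,ξ) : 0 ≤ ξ ≤ x ≤ 1}` of the backstepping kernel. -/
def Tri : Set (ℝ × ℝ) := {p | 0 ≤ p.2 ∧ p.2 ≤ p.1 ∧ p.1 ≤ 1}

open MeasureTheory intervalIntegral

universe u v in
theorem ContinuousOn.exists_continuous_eqOn {X : Type u} {Y : Type v} [TopologicalSpace X]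
    [NormalSpace X] [TopologicalSpace Y] [TietzeExtension.{u, v} Y] {s : Set X} (hs : IsClosed s)
    {f : X → Y} (hf : ContinuousOn f s) : ∃ g : X → Y, Continuous g ∧ EqOn g f s := by
  obtain ⟨g, hg⟩ := ContinuousMap.exists_restrict_eq hs ⟨_, hf.domRestrict⟩
  exact ⟨g, g.continuous, fun x hx => DFunLike.congr_fun hg ⟨x, hx⟩⟩

section Primitives

variable {E : Type*} [NormedAddCommGroup E] [NormedSpace ℝ E]

theorem contDiff_one_uncurry_of_hasDerivAt_partials {f f₁ f₂ : ℝ → ℝ → E}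
    (h₁ : ∀ a b, HasDerivAt (f · b) (f₁ a b) a) (h₂ : ∀ a b, HasDerivAt (f a ·) (f₂ a b) b)
    (hf₁ : Continuous f₁.uncurry) (hf₂ : Continuous f₂.uncurry) :
    ContDiff ℝ 1 f.uncurry := by
  have hL : Continuous (ContinuousLinearMap.toSpanSingleton ℝ : E → ℝ →L[ℝ] E) :=
    ContinuousLinearMap.toSpanSingletonCLE.continuous
  rw [contDiff_one_iff_hasFDerivAt]
  refine ⟨fun p => (ContinuousLinearMap.toSpanSingleton ℝ (f₁.uncurry p)).coprod
    (ContinuousLinearMap.toSpanSingleton ℝ (f₂.uncurry p)), ?_, fun p => ?_⟩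
  · exact (ContinuousLinearMap.coprodEquivL (S := ℝ)).continuous.comp
      ((hL.comp hf₁).prodMk (hL.comp hf₂))
  · exact (hasStrictFDerivAt_uncurry_coprod
      (f₁ := fun a b => ContinuousLinearMap.toSpanSingleton ℝ (f₁ a b))
      (f₂ := fun a b => ContinuousLinearMap.toSpanSingleton ℝ (f₂ a b))
      (.of_forall fun v => h₁ v.1 v.2) (.of_forall fun v => h₂ v.1 v.2)
      (hL.comp hf₁).continuousAt (hL.comp hf₂).continuousAt).hasFDerivAt

theorem intervalIntegral_intervalIntegral_swap_of_continuous {K : ℝ → ℝ → E}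
    (hK : Continuous K.uncurry) (a b c d : ℝ) :
    ∫ x in a..b, ∫ y in c..d, K x y = ∫ y in c..d, ∫ x in a..b, K x y :=
  intervalIntegral_intervalIntegral_swap <|
    (hK.continuousOn.integrableOn_compact (isCompact_uIcc.prod isCompact_uIcc)).mono_set
      (prod_mono uIoc_subset_uIcc uIoc_subset_uIcc)

variable [CompleteSpace E]

theorem contDiff_intervalIntegral_snd_fst {f : ℝ → E} (hf : Continuous f) :
    ContDiff ℝ 1 fun p : ℝ × ℝ => ∫ τ in p.2..p.1, f τ :=
  contDiff_one_uncurry_of_hasDerivAt_partials (f := fun a b => ∫ τ in b..a, f τ)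
    (f₁ := fun a _ => f a) (f₂ := fun _ b => -f b)
    (fun a b => (hf.integral_hasStrictDerivAt b a).hasDerivAt)
    (fun a b => integral_hasDerivAt_left (hf.intervalIntegrable _ _)
      (hf.stronglyMeasurableAtFilter _ _) hf.continuousAt)
    (by fun_prop) (by fun_prop)

theorem contDiff_intervalIntegral_intervalIntegral {K : ℝ → ℝ → E}
    (hK : Continuous K.uncurry) (a₀ b₀ : ℝ) :
    ContDiff ℝ 1 fun p : ℝ × ℝ => ∫ τ in a₀..p.1, ∫ s in b₀..p.2, K τ s := by
  have hK₁ : Continuous fun p : ℝ × ℝ => ∫ s in b₀..p.2, K p.1 s :=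
    continuous_parametric_primitive_of_continuous hK
  have hK₂ : Continuous fun p : ℝ × ℝ => ∫ τ in a₀..p.1, K τ p.2 :=
    continuous_parametric_intervalIntegral_of_continuous (f := fun (p : ℝ × ℝ) τ => K τ p.2)
      (hK.comp (continuous_snd.prodMk (continuous_snd.comp continuous_fst))) continuous_fst
  refine contDiff_one_uncurry_of_hasDerivAt_partials
    (f := fun a b => ∫ τ in a₀..a, ∫ s in b₀..b, K τ s) (f₁ := fun a b => ∫ s in b₀..b, K a s)
    (f₂ := fun a b => ∫ τ in a₀..a, K τ b) (fun a b => ?_) (fun a b => ?_) hK₁ hK₂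
  · exact ((hK₁.comp (by fun_prop : Continuous fun τ : ℝ => (τ, b))).integral_hasStrictDerivAt
      a₀ a).hasDerivAt
  · simp_rw [intervalIntegral_intervalIntegral_swap_of_continuous hK]
    exact ((hK₂.comp (by fun_prop : Continuous fun s : ℝ => (a, s))).integral_hasStrictDerivAt
      b₀ b).hasDerivAt

theorem contDiff_intervalIntegral_snd_fst_intervalIntegral {K : ℝ → ℝ → E}
    (hK : Continuous K.uncurry) (b₀ : ℝ) :
    ContDiff ℝ 1 fun p : ℝ × ℝ => ∫ τ in p.2..p.1, ∫ s in b₀..p.2, K τ s := by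
  set W := fun p : ℝ × ℝ => ∫ τ in (0 : ℝ)..p.1, ∫ s in b₀..p.2, K τ s
  have hW : ContDiff ℝ 1 W := contDiff_intervalIntegral_intervalIntegral hK 0 b₀
  have hInner : ∀ b, Continuous fun τ => ∫ s in b₀..b, K τ s := fun b =>
    continuous_parametric_intervalIntegral_of_continuous' hK b₀ b
  have hsplit : (fun p : ℝ × ℝ => ∫ τ in p.2..p.1, ∫ s in b₀..p.2, K τ s) =
      fun p => W p - W (p.2, p.2) := funext fun p =>
    (integral_interval_sub_left ((hInner _).intervalIntegrable _ _)
      ((hInner _).intervalIntegrable _ _)).symm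
  rw [hsplit]
  exact hW.sub (hW.comp (contDiff_snd.prodMk contDiff_snd))

end Primitives

theorem isClosed_Dcc : IsClosed Dcc :=
  (isClosed_le continuous_const continuous_snd).inter <|
    (isClosed_le continuous_snd continuous_fst).inter <|
      isClosed_le (continuous_fst.add continuous_snd) continuous_const

theorem mapsTo_Tri_Dcc : MapsTo (fun p : ℝ × ℝ => (p.1 + p.2, p.1 - p.2)) Tri Dcc := by
  rintro ⟨x, ξ⟩ ⟨h₁, h₂, h₃⟩
  exact ⟨by dsimp only; linarith, by dsimp only; linarith, by dsimp only; linarith⟩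

noncomputable def kernelEquationRHS (ε c : ℝ) (lam : ℝ → ℝ) (G : ℝ → ℝ → ℝ) (p : ℝ × ℝ) : ℝ :=
  -(1 / (4 * ε)) * (∫ τ in p.2..p.1, (c + lam (τ / 2))) +
    (1 / (4 * ε)) * ∫ τ in p.2..p.1, ∫ s in (0:ℝ)..p.2, (c + lam ((τ - s) / 2)) * G τ s

section KernelEquation

variable (ε c : ℝ) {lam : ℝ → ℝ} {G : ℝ → ℝ → ℝ}

theorem contDiff_kernelEquationRHS (hlam : Continuous lam)
    (hG : Continuous fun p : ℝ × ℝ => G p.1 p.2) :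
    ContDiff ℝ 1 (kernelEquationRHS ε c lam G) := by
  have hK : Continuous (fun τ s => (c + lam ((τ - s) / 2)) * G τ s).uncurry := by
    fun_prop
  exact (contDiff_const.mul (contDiff_intervalIntegral_snd_fst (by fun_prop))).add
    (contDiff_const.mul (contDiff_intervalIntegral_snd_fst_intervalIntegral hK 0))

theorem kernelEquationRHS_congr {lam' : ℝ → ℝ} {G' : ℝ → ℝ → ℝ} (hlam : EqOn lam lam' (Icc 0 1))
    (hG : EqOn (fun p : ℝ × ℝ => G p.1 p.2) (fun p => G' p.1 p.2) Dcc) {p : ℝ × ℝ} (hp : p ∈ Dcc) :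
    kernelEquationRHS ε c lam G p = kernelEquationRHS ε c lam' G' p := by
  obtain ⟨δ, η⟩ := p
  obtain ⟨hη, hηδ, hδη⟩ := hp
  dsimp only at hη hηδ hδη
  unfold kernelEquationRHS
  congr 2
  · refine integral_congr fun τ hτ => ?_
    rw [uIcc_of_le hηδ] at hτ
    rw [hlam ⟨by linarith [hτ.1], by linarith [hτ.2]⟩]
  · refine integral_congr fun τ hτ => integral_congr fun s hs => ?_
    rw [uIcc_of_le hηδ] at hτ
    rw [uIcc_of_le hη] at hs
    rw [hlam ⟨by linarith [hτ.1, hs.2], by linarith [hτ.2, hs.1]⟩,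
      show G τ s = G' τ s from hG (show (τ, s) ∈ Dcc from
        ⟨hs.1, by linarith [hτ.1, hs.2], by linarith [hτ.2, hs.2]⟩)]

theorem kernelEquationRHS_self (x : ℝ) : kernelEquationRHS ε c lam G (x, x) = 0 := by
  simp [kernelEquationRHS]

theorem kernelEquationRHS_two_mul_zero (x : ℝ) :
    kernelEquationRHS ε c lam G (2 * x, 0) = -(1 / (2 * ε)) * ∫ ξ in (0:ℝ)..x, (lam ξ + c) := by
  have hsub : ∫ τ in (0:ℝ)..2 * x, (c + lam (τ / 2)) = 2 * ∫ ξ in (0:ℝ)..x, (lam ξ + c) := by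
    rw [integral_comp_div (fun ξ => c + lam ξ) two_ne_zero]
    simp [add_comm]
  unfold kernelEquationRHS
  dsimp only
  rw [hsub]
  simp only [integral_same, intervalIntegral.integral_zero, mul_zero, add_zero]
  ring

theorem contDiffOn_of_eq_kernelEquationRHS (hlam : ContinuousOn lam (Icc 0 1))
    (hG : ContinuousOn (fun p : ℝ × ℝ => G p.1 p.2) Dcc)
    (hG_eq : ∀ p ∈ Dcc, G p.1 p.2 = kernelEquationRHS ε c lam G p) :
    ContDiffOn ℝ 1 (fun p : ℝ × ℝ => G p.1 p.2) Dcc := by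
  obtain ⟨lam', hlam'c, hlam'⟩ := hlam.exists_continuous_eqOn isClosed_Icc
  obtain ⟨g, hgc, hg⟩ := hG.exists_continuous_eqOn isClosed_Dcc
  refine (contDiff_kernelEquationRHS ε c hlam'c (G := fun a b => g (a, b)) hgc).contDiffOn.congr
    fun p hp => ?_
  rw [hG_eq p hp]
  exact kernelEquationRHS_congr ε c hlam'.symm hg.symm hp

end KernelEquation

theorem kernel_from_integral_equation_C1_and_boundary
    (ε c : ℝ) (lam : ℝ → ℝ) (hlam : ContinuousOn lam (Icc 0 1))
    (G : ℝ → ℝ → ℝ)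
    (hG_cont : ContinuousOn (fun p : ℝ × ℝ => G p.1 p.2) Dcc)
    (hG_eq : ∀ p ∈ Dcc, G p.1 p.2 =
      -(1 / (4 * ε)) * (∫ τ in p.2..p.1, (c + lam (τ / 2))) +
      (1 / (4 * ε)) * ∫ τ in p.2..p.1, ∫ s in (0:ℝ)..p.2,
        (c + lam ((τ - s) / 2)) * G τ s) :
    ContDiffOn ℝ 1 (fun p : ℝ × ℝ => G (p.1 + p.2) (p.1 - p.2)) Tri ∧
    (∀ x ∈ Icc (0:ℝ) 1, G (x + 0) (x - 0) = 0) ∧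
    (∀ x ∈ Icc (0:ℝ) 1, G (x + x) (x - x) =
      -(1 / (2 * ε)) * ∫ ξ in (0:ℝ)..x, (lam ξ + c)) := by
  have hk : ∀ p ∈ Tri, G (p.1 + p.2) (p.1 - p.2) =
      kernelEquationRHS ε c lam G (p.1 + p.2, p.1 - p.2) := fun p hp =>
    hG_eq _ (mapsTo_Tri_Dcc hp)
  refine ⟨?_, fun x hx => ?_, fun x hx => ?_⟩
  · exact (contDiffOn_of_eq_kernelEquationRHS ε c hlam hG_cont hG_eq).comp
      (by fun_prop : ContDiff ℝ 1 fun p : ℝ × ℝ => (p.1 + p.2, p.1 - p.2)).contDiffOn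
      mapsTo_Tri_Dcc
  · rw [hk (x, 0) ⟨le_rfl, hx.1, hx.2⟩]
    simpa using kernelEquationRHS_self ε c x
  · rw [hk (x, x) ⟨hx.1, le_rfl, hx.2⟩, ← two_mul, sub_self]
    exact kernelEquationRHS_two_mul_zero ε c x
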